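/- arXiv:2408.03820 — 2 statements merged into one kernel-verified Lean document; each statement's English description precedes it below -/
import Mathlib

section
/- Let T ⊆ ℝ be an interval, f, h : T → ℝ continuous with f(t) > h(t) for all t ∈ T, and g₊ : T × ℝ → ℝ continuous, strictly positive, and locally Lipschitz in its second variable. Suppose y_f, y_h are differentiable on T with y_f'(t) = f(t)·g₊(t, y_f(t)) and y_h'(t) = h(t)·g₊(t, y_h(t)). If y_f(s) > y_h(s) for some s ∈ T, then y_f(t) > y_h(t) for all t ∈ T with t ≥ s. -/
/-!
Compare the two solutions directly: wherever they meet, `yh t = yf t`, their derivatives are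
`h t * g t (yf t) < f t * g t (yf t)` because `g` is positive, so `yh` can never catch up with
`yf` from below. The fencing theorem for differential inequalities turns this into `yh ≤ yf`;
a touching point `t > s` is then excluded because `yf - yh ≥ 0` to its left forces a nonpositive derivative there.
-/

open Set Filter Topology

theorem HasDerivWithinAt.nonpos_of_eventually_le_left {φ : ℝ → ℝ} {φ' b : ℝ}
    (hφ : HasDerivWithinAt φ φ' (Iio b) b) (hmin : ∀ᶠ x in 𝓝[<] b, φ b ≤ φ x) : φ' ≤ 0 := by
  have hslope : Tendsto (slope φ b) (𝓝[<] b) (𝓝 φ') :=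
    (hasDerivWithinAt_iff_tendsto_slope' self_notMem_Iio).mp hφ
  refine le_of_tendsto hslope ?_
  filter_upwards [hmin, self_mem_nhdsWithin] with x hle hlt
  rw [slope_def_field]
  exact div_nonpos_of_nonneg_of_nonpos (sub_nonneg.mpr hle) (sub_nonpos.mpr (le_of_lt hlt))

theorem image_lt_of_deriv_lt_deriv_boundary {f f' B B' : ℝ → ℝ} {a b : ℝ}
    (hf : ∀ x ∈ Icc a b, HasDerivAt f (f' x) x) (hB : ∀ x ∈ Icc a b, HasDerivAt B (B' x) x)
    (ha : f a < B a) (bound : ∀ x ∈ Icc a b, f x = B x → f' x < B' x) :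
    ∀ ⦃x⦄, x ∈ Icc a b → f x < B x := by
  have hle : ∀ ⦃x⦄, x ∈ Icc a b → f x ≤ B x :=
    image_le_of_deriv_right_lt_deriv_boundary'
      (fun x hx => (hf x hx).continuousAt.continuousWithinAt)
      (fun x hx => (hf x (Ico_subset_Icc_self hx)).hasDerivWithinAt) ha.le
      (fun x hx => (hB x hx).continuousAt.continuousWithinAt)
      (fun x hx => (hB x (Ico_subset_Icc_self hx)).hasDerivWithinAt)
      (fun x hx => bound x (Ico_subset_Icc_self hx))
  intro x hx
  refine (hle hx).lt_of_ne fun heq => (bound x hx heq).not_ge ?_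
  have hax : a < x := hx.1.lt_of_ne (by rintro rfl; exact ha.ne heq)
  have hmin : ∀ᶠ y in 𝓝[<] x, B x - f x ≤ B y - f y := by
    filter_upwards [Ioo_mem_nhdsLT hax] with y hy
    rw [heq, sub_self, sub_nonneg]
    exact hle ⟨hy.1.le, hy.2.le.trans hx.2⟩
  have hderiv := ((hB x hx).sub (hf x hx)).hasDerivWithinAt (s := Iio x)
  exact sub_nonpos.mp (hderiv.nonpos_of_eventually_le_left hmin)

theorem multiplicative_estimation_general
    (T : Set ℝ) (hT : T.OrdConnected)
    (f h : ℝ → ℝ)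
    (hfh : ∀ t ∈ T, h t < f t)
    (g : ℝ → ℝ → ℝ)
    (hg_pos : ∀ t x, 0 < g t x)
    (yf yh : ℝ → ℝ)
    (hyf : ∀ t ∈ T, HasDerivAt yf (f t * g t (yf t)) t)
    (hyh : ∀ t ∈ T, HasDerivAt yh (h t * g t (yh t)) t)
    (s : ℝ) (hs : s ∈ T) (hinit : yh s < yf s) :
    ∀ t ∈ T, s ≤ t → yh t < yf t := by
  intro t ht hst
  have hsub : Icc s t ⊆ T := hT.out hs ht
  refine image_lt_of_deriv_lt_deriv_boundary (fun x hx => hyh x (hsub hx))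
    (fun x hx => hyf x (hsub hx)) hinit (fun x hx hmeet => ?_) ⟨hst, le_rfl⟩
  rw [hmeet]
  exact mul_lt_mul_of_pos_right (hfh x (hsub hx)) (hg_pos x (yf x))

/-- Multiplicative Estimation: solutions of ODEs whose right-hand sides differ by a
multiplicative factor, with common strictly positive factor `g₊`. -/
theorem multiplicative_estimation
    (T : Set ℝ) (hT : T.OrdConnected)
    (f h : ℝ → ℝ) (hf : ContinuousOn f T) (hh : ContinuousOn h T)
    (hfh : ∀ t ∈ T, h t < f t)
    (g : ℝ → ℝ → ℝ)
    (hg_cont : Continuous (fun p : ℝ × ℝ => g p.1 p.2))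
    (hg_pos : ∀ t x, 0 < g t x)
    (hg_lip : ∀ t, LocallyLipschitz (g t))
    (yf yh : ℝ → ℝ)
    (hyf : ∀ t ∈ T, HasDerivAt yf (f t * g t (yf t)) t)
    (hyh : ∀ t ∈ T, HasDerivAt yh (h t * g t (yh t)) t)
    (s : ℝ) (hs : s ∈ T) (hinit : yh s < yf s) :
    ∀ t ∈ T, s ≤ t → yh t < yf t :=
  multiplicative_estimation_general T hT f h hfh g hg_pos yf yh hyf hyh s hs hinit
end

section
/- Under the hypotheses of the previous statement and additionally assuming v(t) → 0 as t → ∞ (e.g. v(t) = r'd'/(r't + d')), every solution L of L'(t) = −k₇·v(t)·(L(t) − L_min) + k₈·(L_max − L(t)) converges to L_max as t → ∞. -/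
/-!
The gap `u = Lmax - L` satisfies `u' = k₇ v (Lmax - Lmin) - (k₈ + k₇ v) u` with `u 0 = 0`.
It cannot become negative, since both terms of `L'` are negative once `L` exceeds `Lmax`.
Once `u ≥ 0`, dropping `-k₇ v u` gives the linear differential inequality
`u' ≤ -k₈ u + k₇ (Lmax - Lmin) v`, whose forcing term tends to zero, and Grönwall's
inequality with the negative rate `-k₈` forces `u → 0`.
-/

open Filter Topology

theorem le_of_hasDerivAt_neg_of_lt {f f' : ℝ → ℝ} {a c : ℝ}
    (hf : ∀ x ≥ a, HasDerivAt f (f' x) x) (ha : f a ≤ c)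
    (hneg : ∀ x ≥ a, c < f x → f' x < 0) :
    ∀ x ≥ a, f x ≤ c := by
  intro x hx
  refine le_of_forall_pos_le_add fun r hr => ?_
  refine image_le_of_deriv_right_lt_deriv_boundary (B := fun _ => c + r) (B' := fun _ => 0)
    (fun y hy => (hf y hy.1).continuousAt.continuousWithinAt)
    (fun y hy => (hf y hy.1).hasDerivWithinAt) (by linarith) (fun _ => hasDerivAt_const _ _)
    (fun y hy hfy => hneg y hy.1 (by linarith)) ⟨hx, le_rfl⟩

theorem tendsto_gronwallBound_of_neg {K : ℝ} (hK : K < 0) (δ ε : ℝ) :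
    Tendsto (gronwallBound δ K ε) atTop (𝓝 (-(ε / K))) := by
  have hexp : Tendsto (fun x => Real.exp (K * x)) atTop (𝓝 0) :=
    Real.tendsto_exp_atBot.comp (tendsto_id.const_mul_atTop_of_neg hK)
  rw [gronwallBound_of_K_ne_0 hK.ne]
  convert (hexp.const_mul δ).add ((hexp.sub_const 1).const_mul (ε / K)) using 2
  ring

section LinearDecay

variable {u u' b : ℝ → ℝ} {κ : ℝ}

theorem eventually_le_of_hasDerivAt_le_neg_mul_add (hκ : 0 < κ)
    (hu : ∀ᶠ t in atTop, HasDerivAt u (u' t) t)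
    (hu' : ∀ᶠ t in atTop, u' t ≤ -κ * u t + b t)
    (hb : Tendsto b atTop (𝓝 0)) {ε : ℝ} (hε : 0 < ε) :
    ∀ᶠ t in atTop, u t ≤ ε := by
  obtain ⟨T, hT⟩ := eventually_atTop.1
    (hu.and (hu'.and (hb.eventually (eventually_le_nhds (by positivity : 0 < κ * ε / 2)))))
  set bound := fun x => gronwallBound (u T) (-κ) (κ * ε / 2) (x - T)
  have hu_le : ∀ x ≥ T, u x ≤ bound x := fun x hx =>
    le_gronwallBound_of_liminf_deriv_right_le
      (fun y hy => (hT y hy.1).1.continuousAt.continuousWithinAt)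
      (fun y hy _ hr => (hT y hy.1).1.hasDerivWithinAt.liminf_right_slope_le hr) le_rfl
      (fun y hy => by linarith [(hT y hy.1).2.1, (hT y hy.1).2.2]) x ⟨hx, le_rfl⟩
  have hbound : Tendsto bound atTop (𝓝 (ε / 2)) := by
    convert (tendsto_gronwallBound_of_neg (neg_lt_zero.2 hκ) (u T) (κ * ε / 2)).comp
      (tendsto_atTop_add_const_right _ (-T) tendsto_id) using 2
    · ext x; simp [bound, sub_eq_add_neg]
    · field_simp
  filter_upwards [eventually_ge_atTop T,
    hbound.eventually (eventually_le_nhds (half_lt_self hε))] with x hx hx'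
    using (hu_le x hx).trans hx'

theorem tendsto_zero_of_hasDerivAt_le_neg_mul_add (hκ : 0 < κ)
    (hu : ∀ᶠ t in atTop, HasDerivAt u (u' t) t)
    (hu' : ∀ᶠ t in atTop, u' t ≤ -κ * u t + b t)
    (hb : Tendsto b atTop (𝓝 0)) (hnonneg : ∀ᶠ t in atTop, 0 ≤ u t) :
    Tendsto u atTop (𝓝 0) :=
  tendsto_order.2 ⟨fun _ hε => hnonneg.mono fun _ ht => hε.trans_le ht, fun _ hε =>
    (eventually_le_of_hasDerivAt_le_neg_mul_add hκ hu hu' hb (half_pos hε)).mono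
      fun _ ht => ht.trans_lt (half_lt_self hε)⟩

end LinearDecay

theorem lattice_spacing_recovery_general (v : ℝ → ℝ)
    (hvnn : ∀ t ≥ (0:ℝ), 0 ≤ v t)
    (hv0 : Filter.Tendsto v Filter.atTop (nhds 0))
    (k₇ k₈ Lmin Lmax : ℝ) (hk₇ : 0 < k₇) (hk₈ : 0 < k₈)
    (hLL : Lmin < Lmax)
    (L : ℝ → ℝ)
    (hL : ∀ t ≥ (0:ℝ), HasDerivAt L
      (-k₇ * v t * (L t - Lmin) + k₈ * (Lmax - L t)) t)
    (hL0 : L 0 = Lmax) :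
    Filter.Tendsto L Filter.atTop (nhds Lmax) := by
  have hle : ∀ t ≥ (0:ℝ), L t ≤ Lmax :=
    le_of_hasDerivAt_neg_of_lt hL hL0.le fun t ht hlt => by
      nlinarith [mul_nonneg hk₇.le (hvnn t ht)]
  have hgap : Tendsto (fun t => Lmax - L t) atTop (𝓝 0) := by
    refine tendsto_zero_of_hasDerivAt_le_neg_mul_add (b := fun t => k₇ * (Lmax - Lmin) * v t)
      hk₈ ((eventually_ge_atTop 0).mono fun t ht => (hL t ht).const_sub Lmax)
      ((eventually_ge_atTop 0).mono fun t ht => ?_)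
      (by simpa using hv0.const_mul (k₇ * (Lmax - Lmin)))
      ((eventually_ge_atTop 0).mono fun t ht => sub_nonneg.2 (hle t ht))
    nlinarith [mul_nonneg (mul_nonneg hk₇.le (hvnn t ht)) (sub_nonneg.2 (hle t ht))]
  simpa using (tendsto_const_nhds (x := Lmax)).sub hgap

/-- Long-time behaviour of the lattice spacing model (1g): if the ion release rate
tends to zero, the lattice spacing recovers to `L_max`. -/
theorem lattice_spacing_recovery (v : ℝ → ℝ) (hvc : Continuous v)
    (hvnn : ∀ t ≥ (0:ℝ), 0 ≤ v t)
    (hv0 : Filter.Tendsto v Filter.atTop (nhds 0))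
    (k₇ k₈ Lmin Lmax : ℝ) (hk₇ : 0 < k₇) (hk₈ : 0 < k₈)
    (hLmin : 0 < Lmin) (hLL : Lmin < Lmax)
    (L : ℝ → ℝ)
    (hL : ∀ t ≥ (0:ℝ), HasDerivAt L
      (-k₇ * v t * (L t - Lmin) + k₈ * (Lmax - L t)) t)
    (hL0 : L 0 = Lmax) :
    Filter.Tendsto L Filter.atTop (nhds Lmax) :=
  lattice_spacing_recovery_general v hvnn hv0 k₇ k₈ Lmin Lmax hk₇ hk₈ hLL L hL hL0
end
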